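/- (Proposition 1, edges sharing one node, different SNPs in the same SNP-set) Let v1, v2, v3 be pairwise distinct nodes and p ≠ p' be distinct SNPs with q(p) = q(p'), and assume σ_f² + 2σ_g² + 2σ_h² > 0. Then Cor(L(v1,v3,p), L(v2,v3,p')) = (σ_f² + σ_g²)/(σ_f² + 2σ_g² + 2σ_h²). -/

import Mathlib

open MeasureTheory ProbabilityTheory

/-- Covariance of two real random variables: `Cov(X,Y) = E[(X - E X)(Y - E Y)]`. -/
noncomputable def cov {Ω : Type*} [MeasurableSpace Ω] (μ : Measure Ω) (X Y : Ω → ℝ) : ℝ :=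
  ∫ ω, (X ω - ∫ x, X x ∂μ) * (Y ω - ∫ x, Y x ∂μ) ∂μ

/-- Pearson correlation: `Cor(X,Y) = Cov(X,Y) / (Var(X)^{1/2} Var(Y)^{1/2})`. -/
noncomputable def cor {Ω : Type*} [MeasurableSpace Ω] (μ : Measure Ω) (X Y : Ω → ℝ) : ℝ :=
  cov μ X Y / (Real.sqrt (variance X μ) * Real.sqrt (variance Y μ))

/-! Index the independent factors by `Q ⊕ (V ⊕ V × P)`; then `L v v' p` is the sum of the
factors in a five-element set, so by bilinearity and independence the covariance of two such sums
is the sum of the variances of the factors they share. For the two edges here these are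
`F (q p) = F (q p')` and `G v₃`, while each variance is the sum of all five variances. -/

section Correlation

variable {Ω : Type*} [MeasurableSpace Ω] {μ : Measure Ω} {X Y : Ω → ℝ}

lemma cov_eq_covariance : cov μ X Y = covariance X Y μ := rfl

lemma cor_eq_cov_div_variance (h : variance Y μ = variance X μ) :
    cor μ X Y = cov μ X Y / variance X μ := by
  rw [cor, h, Real.mul_self_sqrt (variance_nonneg X μ)]

end Correlation

open Finset in
lemma covariance_sum_sum_of_pairwise_indepFun {Ω ι : Type*} [MeasurableSpace Ω] {μ : Measure Ω}
    [IsFiniteMeasure μ] [DecidableEq ι] {Z : ι → Ω → ℝ}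
    (hindep : Pairwise fun i j => IndepFun (Z i) (Z j) μ) (hmem : ∀ i, MemLp (Z i) 2 μ)
    (s t : Finset ι) :
    covariance (∑ i ∈ s, Z i) (∑ j ∈ t, Z j) μ = ∑ i ∈ s ∩ t, variance (Z i) μ := by
  have hcell : ∀ i j, covariance (Z i) (Z j) μ = if i = j then variance (Z j) μ else 0 := by
    intro i j
    split_ifs with hij
    · rw [hij, covariance_self (hmem j).aestronglyMeasurable.aemeasurable]
    · exact (hindep hij).covariance_eq_zero (hmem i) (hmem j)
  simp_rw [covariance_sum_sum' (fun i _ => hmem i) (fun j _ => hmem j), hcell, sum_ite_eq,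
    sum_ite_mem]

section Model

variable {Q V P : Type*} [DecidableEq Q] [DecidableEq V] [DecidableEq P] (q : P → Q)

def edgeFactors (v v' : V) (p : P) : Finset (Q ⊕ (V ⊕ V × P)) :=
  {Sum.inl (q p), Sum.inr (Sum.inl v), Sum.inr (Sum.inl v'), Sum.inr (Sum.inr (v, p)),
    Sum.inr (Sum.inr (v', p))}

lemma sum_edgeFactors {M : Type*} [AddCommMonoid M] {v v' : V} (hv : v ≠ v') (p : P)
    (f : Q ⊕ (V ⊕ V × P) → M) :
    ∑ i ∈ edgeFactors q v v' p, f i = f (Sum.inl (q p)) + f (Sum.inr (Sum.inl v)) +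
      f (Sum.inr (Sum.inl v')) + f (Sum.inr (Sum.inr (v, p))) + f (Sum.inr (Sum.inr (v', p))) := by
  rw [edgeFactors, Finset.sum_insert, Finset.sum_insert, Finset.sum_insert, Finset.sum_pair]
  · simp only [add_assoc]
  all_goals simp [hv]

lemma edgeFactors_inter_edgeFactors {v₁ v₂ v₃ : V} (h12 : v₁ ≠ v₂) {p p' : P} (hp : p ≠ p')
    (hq : q p = q p') :
    edgeFactors q v₁ v₃ p ∩ edgeFactors q v₂ v₃ p' = {Sum.inl (q p), Sum.inr (Sum.inl v₃)} := by
  ext (a | b | ⟨w, r⟩) <;> simp [edgeFactors, hq] <;> grind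

lemma eq_sum_edgeFactors {Ω : Type*} (F : Q → Ω → ℝ) (G : V → Ω → ℝ) (H : V × P → Ω → ℝ)
    {L : V → V → P → Ω → ℝ}
    (hL : ∀ v v' p ω, L v v' p ω = F (q p) ω + G v ω + G v' ω + H (v, p) ω + H (v', p) ω)
    {v v' : V} (hv : v ≠ v') (p : P) :
    L v v' p = ∑ i ∈ edgeFactors q v v' p, Sum.elim F (Sum.elim G H) i := by
  ext ω
  rw [hL, Finset.sum_apply, sum_edgeFactors q hv]
  rfl

end Model

theorem nrss_cor_shared_node_same_set_general
    {Ω Q V P : Type*} [MeasurableSpace Ω]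
    (μ : Measure Ω) [IsProbabilityMeasure μ]
    (q : P → Q)
    (F : Q → Ω → ℝ) (G : V → Ω → ℝ) (H : V × P → Ω → ℝ)
    (σf2 σg2 σh2 : ℝ)
    (hIndep : iIndepFun (m := fun _ : Q ⊕ (V ⊕ V × P) => (inferInstance : MeasurableSpace ℝ))
      (Sum.elim F (Sum.elim G H)) μ)
    (hFmem : ∀ i, MemLp (F i) 2 μ)
    (hGmem : ∀ i, MemLp (G i) 2 μ)
    (hHmem : ∀ i, MemLp (H i) 2 μ)
    (hFvar : ∀ i, variance (F i) μ = σf2)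
    (hGvar : ∀ i, variance (G i) μ = σg2)
    (hHvar : ∀ i, variance (H i) μ = σh2)
    (L : V → V → P → Ω → ℝ)
    (hL : ∀ v v' p ω, L v v' p ω = F (q p) ω + G v ω + G v' ω + H (v, p) ω + H (v', p) ω)
    (v1 v2 v3 : V) (h12 : v1 ≠ v2) (h13 : v1 ≠ v3) (h23 : v2 ≠ v3)
    (p p' : P) (hp : p ≠ p') (hq : q p = q p') :
    cor μ (L v1 v3 p) (L v2 v3 p') = (σf2 + σg2) / (σf2 + 2 * σg2 + 2 * σh2) := by
  classical
  set Z := Sum.elim F (Sum.elim G H)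
  have hZmem : ∀ i, MemLp (Z i) 2 μ := by
    rintro (a | b | c)
    exacts [hFmem a, hGmem b, hHmem c]
  have hZindep : Pairwise fun i j => IndepFun (Z i) (Z j) μ := fun _ _ => hIndep.indepFun
  have hvar : ∀ {v v'} r, v ≠ v' → variance (L v v' r) μ = σf2 + 2 * σg2 + 2 * σh2 := by
    intro v v' r hv
    rw [eq_sum_edgeFactors q F G H hL hv, IndepFun.variance_sum (fun i _ => hZmem i)
      (fun i _ j _ hij => hZindep hij), sum_edgeFactors q hv]
    simp only [Z, Sum.elim_inl, Sum.elim_inr, hFvar, hGvar, hHvar]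
    ring
  rw [cor_eq_cov_div_variance (by rw [hvar p h13, hvar p' h23]), hvar p h13, cov_eq_covariance,
    eq_sum_edgeFactors q F G H hL h13, eq_sum_edgeFactors q F G H hL h23,
    covariance_sum_sum_of_pairwise_indepFun hZindep hZmem,
    edgeFactors_inter_edgeFactors q h12 hp hq, Finset.sum_pair Sum.inl_ne_inr]
  simp only [Z, Sum.elim_inl, Sum.elim_inr, hFvar, hGvar]

/-- Proposition 1, edges sharing one node, different SNPs in the same SNP-set. -/
theorem nrss_cor_shared_node_same_set
    {Ω Q V P : Type*} [MeasurableSpace Ω]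
    (μ : Measure Ω) [IsProbabilityMeasure μ]
    (q : P → Q)
    (F : Q → Ω → ℝ) (G : V → Ω → ℝ) (H : V × P → Ω → ℝ)
    (σf2 σg2 σh2 : ℝ)
    (hIndep : iIndepFun (m := fun _ : Q ⊕ (V ⊕ V × P) => (inferInstance : MeasurableSpace ℝ))
      (Sum.elim F (Sum.elim G H)) μ)
    (hFmem : ∀ i, MemLp (F i) 2 μ)
    (hGmem : ∀ i, MemLp (G i) 2 μ)
    (hHmem : ∀ i, MemLp (H i) 2 μ)
    (hFvar : ∀ i, variance (F i) μ = σf2)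
    (hGvar : ∀ i, variance (G i) μ = σg2)
    (hHvar : ∀ i, variance (H i) μ = σh2)
    (L : V → V → P → Ω → ℝ)
    (hL : ∀ v v' p ω, L v v' p ω = F (q p) ω + G v ω + G v' ω + H (v, p) ω + H (v', p) ω)
    (v1 v2 v3 : V) (h12 : v1 ≠ v2) (h13 : v1 ≠ v3) (h23 : v2 ≠ v3)
    (p p' : P) (hp : p ≠ p') (hq : q p = q p')
    (hpos : 0 < σf2 + 2 * σg2 + 2 * σh2) :
    cor μ (L v1 v3 p) (L v2 v3 p') = (σf2 + σg2) / (σf2 + 2 * σg2 + 2 * σh2) :=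
  nrss_cor_shared_node_same_set_general μ q F G H σf2 σg2 σh2 hIndep hFmem hGmem hHmem hFvar hGvar
    hHvar L hL v1 v2 v3 h12 h13 h23 p p' hp hq
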